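/- For k ∈ ℤ define u_k = (2+√3)^k − (2−√3)^k. Let Δ^L > 0, Δ^R > 0, set a = −(1/2)·Δ^L/(Δ^R+Δ^L) and b = −(1/2)·Δ^R/(Δ^R+Δ^L), let (f_k)_{k∈ℤ} be a real sequence, and fix n ≥ 1. Let C_{1,n} be the weighted sum of f_{-1}, …, f_n obtained from the forward recursion (i.e. C_{1,1} = (3/2)·(1/(Δ^R+Δ^L))·[(Δ^L/Δ^R)·f_1 + (Δ^R/Δ^L − Δ^L/Δ^R)·f_0 − (Δ^R/Δ^L)·f_{-1}], C_{1,2} = [4·C_{1,1} + 3·a·(f_2 − f_0)/Δ^R]/(4+a), and C_{1,j+1} = [4·C_{1,j} + (A_j/A_{j-1})·C_{1,j-1} + 3·A_j·(f_{j+1} − f_{j-1})/Δ^R]/(4 + A_j/A_{j-1}) for j ≥ 2, where A_j = (−1)^{j-1}·u_1·a/(u_j + u_{j-1}·a)), and let B_{m} = b_{m,n} denote the backward coefficients with base values a_{1,n} = A_n and b_{1,n} = u_n·b/(u_n + u_{n-1}·a). Define C_{2,n} = [4·C_{1,n} + 3·b_{1,n}·(f_0 − f_{-2})/Δ^L]/(4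 + b_{1,n}) and, for m ≥ 2, C_{m+1,n} = [4·C_{m,n} + (B_m/B_{m-1})·C_{m-1,n} + 3·B_m·(f_{-m+1} − f_{-m-1})/Δ^L]/(4 + B_m/B_{m-1}). Then all denominators in these recursions are nonzero and, for every m ≥ 1, C_{m,n} = Σ_{k=-m}^{n} ω_{k,m,n}·f_k, where, with D = u_m·u_n + u_m·u_{n-1}·a + u_n·u_{m-1}·b: ω_{n,m,n} = 3·(−1)^n·(a/Δ^R)·u_m·u_1/D; ω_{k,m,n} = 3·(−1)^k·(a/Δ^R)·u_m·(u_{n-k+1} − u_{n-k-1})/D for 1 ≤ k ≤ n−1; ω_{0,m,n} = 3·[(a/Δ^R)·u_m·(u_n − u_{n-1}) − (b/Δ^L)·u_n·(u_m − u_{m-1})]/D; ω_{k,m,n} = 3·(−1)^{k+1}·(b/Δ^L)·u_n·(u_{m+k+1} − u_{m+k-1})/D for −(m−1) ≤ k ≤ −1; and ω_{-m,m,n} = 3·(−1)^{m+1}·(b/Δ^L)·u_n·u_1/D. -/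

import Mathlib

/-!
Both denominators, `E_j = u_j + a u_{j-1}` of the forward sweep and
`D_m = u_m E_n + b u_n u_{m-1}` of the backward one, solve `P_{j+1} = 4 P_j - P_{j-1}` and are
positive, since `a, b < 0` and `a + b = -1/2`. The coefficients are `A_j = (-1)^(j-1) K / E_j`
and `b_{m,n} = (-1)^(m-1) K' / D_m` with `K = u_1 a` and `K' = u_1 u_n b`, so that
`4 + A_j / A_{j-1} = E_{j+1} / E_j`, and the recursion for `C` becomes the linear recurrence
`N_{j+1} = 4 N_j - N_{j-1} + forcing` for the numerators `N_j = C_j P_j`. The claimed weight sums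
satisfy this recurrence with the same initial values: the numerator of `C_{m,n}` is `u_m` times a
one-sided sum over `f_0, …, f_n` minus `u_n` times the same one-sided sum over the reflected
values `f_0, …, f_{-m}`.
-/

noncomputable def uSeq (k : ℤ) : ℝ :=
  (2 + Real.sqrt 3) ^ k - (2 - Real.sqrt 3) ^ k

open Finset

lemma uSeq_zero : uSeq 0 = 0 := by simp [uSeq]

lemma uSeq_one : uSeq 1 = 2 * Real.sqrt 3 := by simp [uSeq]; ring

lemma uSeq_one_pos : 0 < uSeq 1 := by rw [uSeq_one]; positivity

lemma uSeq_neg_one : uSeq (-1) = -uSeq 1 := by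
  have h : (2 + Real.sqrt 3) * (2 - Real.sqrt 3) = 1 := by
    nlinarith [Real.sq_sqrt (show (0 : ℝ) ≤ 3 by norm_num)]
  simp only [uSeq, zpow_neg_one, zpow_one, inv_eq_of_mul_eq_one_right h,
    inv_eq_of_mul_eq_one_left h]
  ring

/-- `2 ± √3` are the roots of `x ^ 2 = 4 x - 1`. -/
lemma uSeq_add_two (k : ℤ) : uSeq (k + 2) = 4 * uSeq (k + 1) - uSeq k := by
  have hsq : Real.sqrt 3 ^ 2 = 3 := Real.sq_sqrt (by norm_num)
  have hα : 2 + Real.sqrt 3 ≠ 0 := by positivity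
  have hβ : 2 - Real.sqrt 3 ≠ 0 := by nlinarith
  simp only [uSeq, zpow_add₀ hα, zpow_add₀ hβ]
  norm_num
  linear_combination ((2 + Real.sqrt 3) ^ k - (2 - Real.sqrt 3) ^ k) * hsq

lemma uSeq_two : uSeq 2 = 4 * uSeq 1 := by
  simpa [uSeq_zero] using uSeq_add_two 0

lemma uSeq_three : uSeq 3 = 15 * uSeq 1 := by
  have := uSeq_add_two 1
  norm_num [uSeq_two] at this
  linarith

def FourRec (P : ℕ → ℝ) : Prop := ∀ i, P (i + 2) = 4 * P (i + 1) - P i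

lemma FourRec.le_succ_and_pos {P : ℕ → ℝ} (hP : FourRec P) (h01 : P 0 ≤ P 1) (h1 : 0 < P 1)
    (i : ℕ) : P i ≤ P (i + 1) ∧ 0 < P (i + 1) := by
  induction i with
  | zero => exact ⟨h01, h1⟩
  | succ i ih =>
    have := hP i
    constructor <;> linarith [ih.1, ih.2]

lemma fourRec_uSeq : FourRec fun i ↦ uSeq i := fun i ↦ by
  push_cast
  exact uSeq_add_two i

lemma uSeq_le_succ_and_pos (i : ℕ) : uSeq i ≤ uSeq (i + 1) ∧ 0 < uSeq (i + 1) := by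
  simpa using fourRec_uSeq.le_succ_and_pos (by simp [uSeq_zero, uSeq_one_pos.le])
    (by simpa using uSeq_one_pos) i

lemma uSeq_pos {n : ℕ} (hn : 1 ≤ n) : 0 < uSeq n := by
  obtain ⟨i, rfl⟩ := Nat.exists_eq_add_of_le' hn
  simpa using (uSeq_le_succ_and_pos i).2

lemma uSeq_sub_one_le {n : ℕ} (hn : 1 ≤ n) : uSeq (n - 1) ≤ uSeq n := by
  obtain ⟨i, rfl⟩ := Nat.exists_eq_add_of_le' hn
  simpa using (uSeq_le_succ_and_pos i).1

noncomputable def uSeqComb (α β : ℝ) (j : ℕ) : ℝ := α * uSeq j + β * uSeq (j - 1)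

lemma uSeqComb_zero (α β : ℝ) : uSeqComb α β 0 = -β * uSeq 1 := by
  simp [uSeqComb, uSeq_zero, uSeq_neg_one]

lemma uSeqComb_one (α β : ℝ) : uSeqComb α β 1 = α * uSeq 1 := by
  simp [uSeqComb, uSeq_zero]

lemma uSeqComb_one_left (a : ℝ) (j : ℕ) : uSeqComb 1 a j = uSeq j + uSeq (j - 1) * a := by
  rw [uSeqComb]; ring

lemma uSeqComb_uSeqComb_one_left (a b : ℝ) (n m : ℕ) :
    uSeqComb (uSeqComb 1 a n) (uSeq n * b) m
      = uSeq m * uSeq n + uSeq m * uSeq (n - 1) * a + uSeq n * uSeq (m - 1) * b := by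
  simp only [uSeqComb]; ring

lemma fourRec_uSeqComb (α β : ℝ) : FourRec (uSeqComb α β) := fun i ↦ by
  have h₁ := uSeq_add_two i
  have h₂ := uSeq_add_two (i - 1)
  simp only [uSeqComb]
  push_cast
  rw [show (i : ℤ) + 2 - 1 = i - 1 + 2 by ring, show (i : ℤ) + 1 - 1 = i - 1 + 1 by ring,
    h₁, h₂]
  ring_nf

lemma uSeqComb_pos {α β : ℝ} (hα : 0 < α) (hβ : -β ≤ α) (i : ℕ) :
    0 < uSeqComb α β (i + 1) := by
  refine ((fourRec_uSeqComb α β).le_succ_and_pos ?_ ?_ i).2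
  · rw [uSeqComb_zero, uSeqComb_one]
    exact mul_le_mul_of_nonneg_right hβ uSeq_one_pos.le
  · rw [uSeqComb_one]
    exact mul_pos hα uSeq_one_pos

lemma uSeqComb_uSeqComb_pos {a b : ℝ} (ha : a < 0) (hb : b < 0) (hab : a + b = -1 / 2) {n : ℕ}
    (hn : 1 ≤ n) (i : ℕ) : 0 < uSeqComb (uSeqComb 1 a n) (uSeq n * b) (i + 1) := by
  obtain ⟨k, rfl⟩ := Nat.exists_eq_add_of_le' hn
  refine uSeqComb_pos (uSeqComb_pos one_pos (by linarith) k) ?_ i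
  rw [uSeqComb_one_left]
  nlinarith [mul_le_mul_of_nonpos_left (uSeq_sub_one_le hn) ha.le, uSeq_pos hn]

section AlternatingRatio

variable {P r x N c : ℕ → ℝ} {K : ℝ}

lemma four_add_div_eq_of_fourRec (hP : FourRec P) (hP0 : P 0 = -K) (hP1 : P 1 ≠ 0) :
    4 + K / P 1 = P 2 / P 1 := by
  rw [hP 0, hP0]; field_simp; ring

lemma four_add_ratio_eq_of_fourRec (hP : FourRec P) (hK : K ≠ 0) {i : ℕ}
    (hP2 : P (i + 2) ≠ 0)
    (hr₁ : r (i + 1) = (-1) ^ i * K / P (i + 1))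
    (hr₂ : r (i + 2) = (-1) ^ (i + 1) * K / P (i + 2)) :
    4 + r (i + 2) / r (i + 1) = P (i + 3) / P (i + 2) := by
  rw [hr₁, hr₂, pow_succ, hP (i + 1)]
  field_simp [hP2]
  ring

lemma eq_alternating_div_of_ratio_rec (hP : FourRec P) (hP0 : P 0 = -K)
    (hpos : ∀ i, 0 < P (i + 1)) (hK : K ≠ 0) (hr1 : r 1 = K / P 1)
    (hr2 : r 2 = -r 1 / (4 + r 1))
    (hrec : ∀ j, 2 ≤ j → r (j + 1) = -r j / (4 + r j / r (j - 1))) :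
    ∀ i, r (i + 1) = (-1) ^ i * K / P (i + 1) := by
  have hne i : P (i + 1) ≠ 0 := (hpos i).ne'
  suffices h : ∀ i, r (i + 1) = (-1) ^ i * K / P (i + 1) ∧
      r (i + 2) = (-1) ^ (i + 1) * K / P (i + 2) from fun i ↦ (h i).1
  intro i
  induction i with
  | zero =>
    refine ⟨by simpa using hr1, ?_⟩
    rw [hr2, hr1, four_add_div_eq_of_fourRec hP hP0 (hne 0)]
    field_simp [hne 0, hne 1]
    ring
  | succ i ih =>
    refine ⟨ih.2, ?_⟩
    rw [hrec (i + 2) (by omega), show i + 2 - 1 = i + 1 from rfl,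
      four_add_ratio_eq_of_fourRec hP hK (hne (i + 1)) ih.1 ih.2, ih.2, pow_succ]
    field_simp [hne (i + 1), hne (i + 2)]
    ring

lemma ratio_ne_zero_of_alternating (hP : FourRec P) (hpos : ∀ i, 0 < P (i + 1)) (hK : K ≠ 0)
    (hr : ∀ i, r (i + 1) = (-1) ^ i * K / P (i + 1)) {j : ℕ} (hj : 2 ≤ j) :
    r (j - 1) ≠ 0 ∧ 4 + r j / r (j - 1) ≠ 0 := by
  obtain ⟨i, rfl⟩ := Nat.exists_eq_add_of_le' hj
  rw [show i + 2 - 1 = i + 1 from rfl, four_add_ratio_eq_of_fourRec hP hK (hpos (i + 1)).ne'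
    (hr i) (hr (i + 1))]
  refine ⟨?_, (div_pos (hpos (i + 2)) (hpos (i + 1))).ne'⟩
  rw [hr i]
  exact div_ne_zero (mul_ne_zero (pow_ne_zero _ (by norm_num)) hK) (hpos i).ne'

lemma four_add_ne_zero_of_alternating (hP : FourRec P) (hP0 : P 0 = -K)
    (hpos : ∀ i, 0 < P (i + 1)) (hr : ∀ i, r (i + 1) = (-1) ^ i * K / P (i + 1)) :
    4 + r 1 ≠ 0 := by
  rw [show r 1 = K / P 1 by simpa using hr 0, four_add_div_eq_of_fourRec hP hP0 (hpos 0).ne']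
  exact (div_pos (hpos 1) (hpos 0)).ne'

lemma eq_div_of_ratio_rec (hP : FourRec P) (hP0 : P 0 = -K) (hpos : ∀ i, 0 < P (i + 1))
    (hK : K ≠ 0) (hr : ∀ i, r (i + 1) = (-1) ^ i * K / P (i + 1))
    (hN2 : N 2 = 4 * N 1 + K * c 1)
    (hN : ∀ i, 1 ≤ i → N (i + 2) = 4 * N (i + 1) - N i + (-1) ^ i * K * c (i + 1))
    (hx1 : x 1 = N 1 / P 1) (hx2 : x 2 = (4 * x 1 + r 1 * c 1) / (4 + r 1))
    (hx : ∀ j, 2 ≤ j →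
      x (j + 1) = (4 * x j + r j / r (j - 1) * x (j - 1) + r j * c j) / (4 + r j / r (j - 1)))
    {j : ℕ} (hj : 1 ≤ j) : x j = N j / P j := by
  have hne i : P (i + 1) ≠ 0 := (hpos i).ne'
  suffices h : ∀ i, x (i + 1) = N (i + 1) / P (i + 1) ∧ x (i + 2) = N (i + 2) / P (i + 2) by
    obtain ⟨i, rfl⟩ := Nat.exists_eq_add_of_le' hj
    exact (h i).1
  intro i
  induction i with
  | zero =>
    refine ⟨hx1, ?_⟩
    have hr1 : r 1 = K / P 1 := by simpa using hr 0
    rw [hx2, hr1, four_add_div_eq_of_fourRec hP hP0 (hne 0), hx1, hN2]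
    field_simp [hne 0, hne 1]
  | succ i ih =>
    refine ⟨ih.2, ?_⟩
    have hratio : r (i + 2) / r (i + 1) = -P (i + 1) / P (i + 2) := by
      rw [hr i, hr (i + 1), pow_succ]
      field_simp [hne i, hne (i + 1)]
    rw [hx (i + 2) (by omega), show i + 2 - 1 = i + 1 from rfl,
      four_add_ratio_eq_of_fourRec hP hK (hne (i + 1)) (hr i) (hr (i + 1)), hratio,
      ih.1, ih.2, hr (i + 1), hN (i + 1) (by omega)]
    field_simp [hne i, hne (i + 1), hne (i + 2)]
    ring

end AlternatingRatio

lemma sum_Icc_add_one_right {M : Type*} [AddCommMonoid M] (φ : ℤ → M) {a b : ℤ}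
    (h : a ≤ b + 1) : ∑ k ∈ Icc a (b + 1), φ k = ∑ k ∈ Icc a b, φ k + φ (b + 1) := by
  rw [← insert_Icc_right_eq_Icc_add_one h, sum_insert (by simp), add_comm]

lemma sum_Icc_neg {M : Type*} [AddCommMonoid M] (φ : ℤ → M) (m : ℤ) :
    ∑ k ∈ Icc (-m + 1) (-1), φ k = ∑ k ∈ Icc 1 (m - 1), φ (-k) :=
  sum_nbij' (fun k ↦ -k) (fun k ↦ -k) (fun k hk ↦ by simp at hk ⊢; omega)
    (fun k hk ↦ by simp at hk ⊢; omega) (fun k _ ↦ neg_neg k) (fun k _ ↦ neg_neg k)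
    (fun k _ ↦ by rw [neg_neg])

noncomputable def oneSidedSum (g : ℤ → ℝ) (n : ℕ) : ℝ :=
  (-1) ^ n * uSeq 1 * g n
    + ∑ k ∈ Icc (1 : ℤ) (n - 1), (-1) ^ k * (uSeq (n - k + 1) - uSeq (n - k - 1)) * g k
    + (uSeq n - uSeq (n - 1)) * g 0

lemma oneSidedSum_one (g : ℤ → ℝ) : oneSidedSum g 1 = uSeq 1 * (g 0 - g 1) := by
  simp [oneSidedSum, uSeq_zero]
  ring

lemma oneSidedSum_two (g : ℤ → ℝ) :
    oneSidedSum g 2 = 4 * oneSidedSum g 1 + uSeq 1 * (g 2 - g 0) := by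
  simp [oneSidedSum, uSeq_zero, uSeq_two]
  ring

lemma oneSidedSum_add_two (g : ℤ → ℝ) {n : ℕ} (hn : 1 ≤ n) :
    oneSidedSum g (n + 2)
      = 4 * oneSidedSum g (n + 1) - oneSidedSum g n + (-1) ^ n * uSeq 1 * (g (n + 2) - g n) := by
  set t : ℤ → ℤ → ℝ := fun m k ↦ (-1) ^ k * (uSeq (m - k + 1) - uSeq (m - k - 1)) * g k
  have hsplit₁ : ∑ k ∈ Icc (1 : ℤ) (n + 1), t (n + 2) k
      = ∑ k ∈ Icc (1 : ℤ) (n - 1), t (n + 2) k + t (n + 2) n + t (n + 2) (n + 1) := by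
    rw [sum_Icc_add_one_right _ (by omega), ← sub_add_cancel (n : ℤ) 1,
      sum_Icc_add_one_right _ (by omega), sub_add_cancel]
  have hsplit₂ : ∑ k ∈ Icc (1 : ℤ) n, t (n + 1) k
      = ∑ k ∈ Icc (1 : ℤ) (n - 1), t (n + 1) k + t (n + 1) n := by
    rw [← sub_add_cancel (n : ℤ) 1, sum_Icc_add_one_right _ (by omega), sub_add_cancel]
  have hbulk : ∑ k ∈ Icc (1 : ℤ) (n - 1), t (n + 2) k
      = 4 * ∑ k ∈ Icc (1 : ℤ) (n - 1), t (n + 1) k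
        - ∑ k ∈ Icc (1 : ℤ) (n - 1), t n k := by
    rw [mul_sum, ← sum_sub_distrib]
    refine sum_congr rfl fun k _ ↦ ?_
    have h₁ := uSeq_add_two (n - k + 1)
    have h₂ := uSeq_add_two (n - k - 1)
    simp only [t]
    ring_nf at h₁ h₂ ⊢
    rw [h₁, h₂]
    ring
  have hu := uSeq_add_two n
  have hu' : uSeq (n + 1) = 4 * uSeq n - uSeq (n - 1) := by
    rw [show (n : ℤ) + 1 = n - 1 + 2 by ring, uSeq_add_two]; ring_nf
  simp only [oneSidedSum]
  push_cast
  simp only [show (n : ℤ) + 2 - 1 = n + 1 by ring, show (n : ℤ) + 1 - 1 = n by ring]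
  rw [hsplit₁, hsplit₂, hbulk]
  simp only [t, show (n : ℤ) + 2 - n + 1 = 3 by ring, show (n : ℤ) + 2 - n - 1 = 1 by ring,
    show (n : ℤ) + 2 - (n + 1) + 1 = 2 by ring, show (n : ℤ) + 2 - (n + 1) - 1 = 0 by ring,
    show (n : ℤ) + 1 - n + 1 = 2 by ring, show (n : ℤ) + 1 - n - 1 = 0 by ring,
    zpow_add_one₀ (show (-1 : ℝ) ≠ 0 by norm_num), zpow_natCast, uSeq_zero, uSeq_two,
    uSeq_three, hu, hu']
  ring

section Numerators

variable (a b ΔL ΔR : ℝ) (f : ℤ → ℝ)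

noncomputable def forwardNumerator (j : ℕ) : ℝ :=
  3 * (a / ΔR) * oneSidedSum f j + 3 * (b / ΔL) * (f (-1) - f 0) * uSeq j

noncomputable def twoSidedNumerator (n m : ℕ) : ℝ :=
  3 * (a / ΔR) * uSeq m * oneSidedSum f n
    - 3 * (b / ΔL) * uSeq n * oneSidedSum (fun k ↦ f (-k)) m

lemma forwardNumerator_two :
    forwardNumerator a b ΔL ΔR f 2
      = 4 * forwardNumerator a b ΔL ΔR f 1 + uSeq 1 * a * (3 * (f 2 - f 0) / ΔR) := by
  simp only [forwardNumerator, oneSidedSum_two, Nat.cast_ofNat, uSeq_two, Nat.cast_one]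
  ring

lemma forwardNumerator_add_two {i : ℕ} (hi : 1 ≤ i) :
    forwardNumerator a b ΔL ΔR f (i + 2)
      = 4 * forwardNumerator a b ΔL ΔR f (i + 1) - forwardNumerator a b ΔL ΔR f i
        + (-1) ^ i * (uSeq 1 * a)
          * (3 * (f ((i + 1 : ℕ) + 1) - f ((i + 1 : ℕ) - 1)) / ΔR) := by
  simp only [forwardNumerator, oneSidedSum_add_two f hi]
  push_cast
  rw [uSeq_add_two]
  ring_nf

lemma twoSidedNumerator_one (n : ℕ) :
    twoSidedNumerator a b ΔL ΔR f n 1 = uSeq 1 * forwardNumerator a b ΔL ΔR f n := by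
  simp only [twoSidedNumerator, forwardNumerator, oneSidedSum_one, Nat.cast_one, neg_zero]
  ring

lemma twoSidedNumerator_two (n : ℕ) :
    twoSidedNumerator a b ΔL ΔR f n 2 = 4 * twoSidedNumerator a b ΔL ΔR f n 1
      + uSeq 1 * uSeq n * b * (3 * (f 0 - f (-2)) / ΔL) := by
  simp only [twoSidedNumerator, oneSidedSum_two, Nat.cast_ofNat, uSeq_two, Nat.cast_one, neg_zero]
  ring

lemma twoSidedNumerator_add_two (n : ℕ) {i : ℕ} (hi : 1 ≤ i) :
    twoSidedNumerator a b ΔL ΔR f n (i + 2)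
      = 4 * twoSidedNumerator a b ΔL ΔR f n (i + 1) - twoSidedNumerator a b ΔL ΔR f n i
        + (-1) ^ i * (uSeq 1 * uSeq n * b)
          * (3 * (f (-(i + 1 : ℕ) + 1) - f (-(i + 1 : ℕ) - 1)) / ΔL) := by
  simp only [twoSidedNumerator, oneSidedSum_add_two _ hi]
  push_cast
  rw [uSeq_add_two]
  ring_nf

end Numerators

lemma forwardCoeff_eq_div {a b ΔL ΔR : ℝ} {f : ℤ → ℝ} {A Cf : ℕ → ℝ} (ha : a ≠ 0)
    (hE : ∀ i, 0 < uSeqComb 1 a (i + 1))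
    (hA : ∀ i, A (i + 1) = (-1) ^ i * (uSeq 1 * a) / uSeqComb 1 a (i + 1))
    (hCf1 : Cf 1 = 3 * (a / ΔR) * (f 0 - f 1) + 3 * (b / ΔL) * (f (-1) - f 0))
    (hCf2 : Cf 2 = (4 * Cf 1 + 3 * a * (f 2 - f 0) / ΔR) / (4 + a))
    (hCfrec : ∀ j : ℕ, 2 ≤ j →
      Cf (j + 1) = (4 * Cf j + (A j / A (j - 1)) * Cf (j - 1)
                    + 3 * A j * (f ((j : ℤ) + 1) - f ((j : ℤ) - 1)) / ΔR) /
                   (4 + A j / A (j - 1)))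
    {j : ℕ} (hj : 1 ≤ j) :
    Cf j = forwardNumerator a b ΔL ΔR f j / uSeqComb 1 a j := by
  have hu := uSeq_one_pos.ne'
  have hA1 : A 1 = a := by rw [hA 0, uSeqComb_one]; field_simp
  refine eq_div_of_ratio_rec (fourRec_uSeqComb 1 a) (by rw [uSeqComb_zero]; ring) hE
    (mul_ne_zero hu ha) hA (c := fun j : ℕ ↦ 3 * (f (j + 1) - f (j - 1)) / ΔR)
    (by simpa using forwardNumerator_two a b ΔL ΔR f)
    (fun i hi ↦ forwardNumerator_add_two a b ΔL ΔR f hi) ?_ ?_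
    (fun j hj ↦ by rw [hCfrec j hj]; ring1) hj
  · rw [hCf1, forwardNumerator, oneSidedSum_one, uSeqComb_one, Nat.cast_one]
    field_simp
  · rw [hCf2, hA1]
    norm_num
    ring

lemma backwardCoeff_eq_div {a b ΔL ΔR : ℝ} {f : ℤ → ℝ} {n : ℕ} {B Cf C : ℕ → ℝ}
    (hb : b ≠ 0) (hn : 1 ≤ n) (hD : ∀ i, 0 < uSeqComb (uSeqComb 1 a n) (uSeq n * b) (i + 1))
    (hB : ∀ i, B (i + 1)
      = (-1) ^ i * (uSeq 1 * uSeq n * b) / uSeqComb (uSeqComb 1 a n) (uSeq n * b) (i + 1))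
    (hCfn : Cf n = forwardNumerator a b ΔL ΔR f n / uSeqComb 1 a n)
    (hCm1 : C 1 = Cf n)
    (hCm2 : C 2 = (4 * C 1 + 3 * B 1 * (f 0 - f (-2)) / ΔL) / (4 + B 1))
    (hCmrec : ∀ m : ℕ, 2 ≤ m →
      C (m + 1) = (4 * C m + (B m / B (m - 1)) * C (m - 1)
                    + 3 * B m * (f (-(m : ℤ) + 1) - f (-(m : ℤ) - 1)) / ΔL) /
                  (4 + B m / B (m - 1)))
    {m : ℕ} (hm : 1 ≤ m) :
    C m = twoSidedNumerator a b ΔL ΔR f n m / uSeqComb (uSeqComb 1 a n) (uSeq n * b) m := by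
  have hE : uSeqComb 1 a n ≠ 0 := by
    simpa [uSeqComb_one, uSeq_one_pos.ne'] using (hD 0).ne'
  refine eq_div_of_ratio_rec (fourRec_uSeqComb _ _) (by rw [uSeqComb_zero]; ring) hD
    (mul_ne_zero (mul_ne_zero uSeq_one_pos.ne' (uSeq_pos hn).ne') hb) hB
    (c := fun m : ℕ ↦ 3 * (f (-(m : ℤ) + 1) - f (-(m : ℤ) - 1)) / ΔL)
    (by norm_num [twoSidedNumerator_two])
    (fun i hi ↦ twoSidedNumerator_add_two a b ΔL ΔR f n hi) ?_ ?_
    (fun m hm ↦ by rw [hCmrec m hm]; ring1) hm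
  · rw [hCm1, hCfn, twoSidedNumerator_one, uSeqComb_one]
    field_simp [uSeq_one_pos.ne']
  · rw [hCm2]
    norm_num
    ring

lemma twoSidedNumerator_div_eq (a b ΔL ΔR D : ℝ) (f : ℤ → ℝ) (n m : ℕ) :
    twoSidedNumerator a b ΔL ΔR f n m / D =
      3 * (-1 : ℝ) ^ n * (a / ΔR) * uSeq (m : ℤ) * uSeq 1 / D * f (n : ℤ)
          + (∑ k ∈ Finset.Icc (1 : ℤ) ((n : ℤ) - 1),
              3 * (-1 : ℝ) ^ k * (a / ΔR) * uSeq (m : ℤ) *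
                (uSeq ((n : ℤ) - k + 1) - uSeq ((n : ℤ) - k - 1)) / D * f k)
          + 3 * ((a / ΔR) * uSeq (m : ℤ) * (uSeq (n : ℤ) - uSeq ((n : ℤ) - 1))
                  - (b / ΔL) * uSeq (n : ℤ) * (uSeq (m : ℤ) - uSeq ((m : ℤ) - 1))) / D * f 0
          + (∑ k ∈ Finset.Icc (-(m : ℤ) + 1) (-1 : ℤ),
              3 * (-1 : ℝ) ^ (k + 1) * (b / ΔL) * uSeq (n : ℤ) *
                (uSeq ((m : ℤ) + k + 1) - uSeq ((m : ℤ) + k - 1)) / D * f k)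
          + 3 * (-1 : ℝ) ^ (m + 1) * (b / ΔL) * uSeq (n : ℤ) * uSeq 1 / D
            * f (-(m : ℤ)) := by
  have hright : ∑ k ∈ Icc (1 : ℤ) (n - 1),
      3 * (-1 : ℝ) ^ k * (a / ΔR) * uSeq m * (uSeq (n - k + 1) - uSeq (n - k - 1)) / D * f k
      = 3 * (a / ΔR) * uSeq m / D *
        ∑ k ∈ Icc (1 : ℤ) (n - 1),
          (-1) ^ k * (uSeq (n - k + 1) - uSeq (n - k - 1)) * f k := by
    rw [mul_sum]
    exact sum_congr rfl fun k _ ↦ by ring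
  have hleft : ∑ k ∈ Icc (-(m : ℤ) + 1) (-1),
      3 * (-1 : ℝ) ^ (k + 1) * (b / ΔL) * uSeq n * (uSeq (m + k + 1) - uSeq (m + k - 1)) / D
        * f k
      = -(3 * (b / ΔL) * uSeq n / D) *
        ∑ k ∈ Icc (1 : ℤ) (m - 1),
          (-1) ^ k * (uSeq (m - k + 1) - uSeq (m - k - 1)) * f (-k) := by
    rw [sum_Icc_neg, mul_sum]
    refine sum_congr rfl fun k _ ↦ ?_
    rw [zpow_add_one₀ (by norm_num), zpow_neg, ← inv_zpow, inv_neg, inv_one]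
    ring_nf
  rw [hright, hleft, twoSidedNumerator, oneSidedSum, oneSidedSum, neg_zero]
  ring

lemma interface_coeffs_neg_and_sum {ΔL ΔR a b : ℝ} (hL : 0 < ΔL) (hR : 0 < ΔR)
    (ha : a = -(1/2) * ΔL / (ΔR + ΔL)) (hb : b = -(1/2) * ΔR / (ΔR + ΔL)) :
    a < 0 ∧ b < 0 ∧ a + b = -1 / 2 := by
  have hS : 0 < ΔR + ΔL := by linarith
  refine ⟨?_, ?_, ?_⟩
  · rw [ha]; exact div_neg_of_neg_of_pos (by linarith) hS
  · rw [hb]; exact div_neg_of_neg_of_pos (by linarith) hS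
  · rw [ha, hb]; field_simp; ring

/-- **Explicit weights of the inhomogeneous coefficient `c_{m,n}` of the
two-sided extension relation in the uniform-per-patch case.** For a fixed
`n ≥ 1`, the coefficient `C_{m,n}` obtained from the forward value `C_{1,n}`
by the backward recursion has nonzero denominators and equals the weighted sum
`Σ_{k=-m}^{n} ω_{k,m,n} f_k` with the stated explicit weights. -/
theorem two_sided_inhomogeneous_coefficient_weights
    (ΔL ΔR : ℝ) (hL : 0 < ΔL) (hR : 0 < ΔR)
    (a b : ℝ)
    (ha : a = -(1/2) * ΔL / (ΔR + ΔL))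
    (hb : b = -(1/2) * ΔR / (ΔR + ΔL))
    (f : ℤ → ℝ) (n : ℕ) (hn : 1 ≤ n)
    (A : ℕ → ℝ)
    (hA : ∀ j : ℕ, 1 ≤ j →
      A j = (-1 : ℝ) ^ (j - 1) * uSeq 1 * a / (uSeq (j : ℤ) + uSeq ((j : ℤ) - 1) * a))
    -- the forward recursion for `C_{1,j}`, `j = 1, …, n`
    (Cf : ℕ → ℝ)
    (hCf1 : Cf 1 = 3/2 * (1 / (ΔR + ΔL)) *
      ((ΔL / ΔR) * f 1 + (ΔR / ΔL - ΔL / ΔR) * f 0 - (ΔR / ΔL) * f (-1)))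
    (hCf2 : Cf 2 = (4 * Cf 1 + 3 * a * (f 2 - f 0) / ΔR) / (4 + a))
    (hCfrec : ∀ j : ℕ, 2 ≤ j →
      Cf (j + 1) = (4 * Cf j + (A j / A (j - 1)) * Cf (j - 1)
                    + 3 * A j * (f ((j : ℤ) + 1) - f ((j : ℤ) - 1)) / ΔR) /
                   (4 + A j / A (j - 1)))
    -- the backward coefficients `b_{m,n}` with base value `b_{1,n}`
    (B : ℕ → ℝ)
    (hB1 : B 1 = uSeq (n : ℤ) * b / (uSeq (n : ℤ) + uSeq ((n : ℤ) - 1) * a))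
    (hB2 : B 2 = -B 1 / (4 + B 1))
    (hBrec : ∀ j : ℕ, 2 ≤ j → B (j + 1) = -B j / (4 + B j / B (j - 1)))
    -- the backward recursion for `C_{m,n}`, starting from `C_{1,n} = Cf n`
    (C : ℕ → ℝ)
    (hCm1 : C 1 = Cf n)
    (hCm2 : C 2 = (4 * C 1 + 3 * B 1 * (f 0 - f (-2)) / ΔL) / (4 + B 1))
    (hCmrec : ∀ m : ℕ, 2 ≤ m →
      C (m + 1) = (4 * C m + (B m / B (m - 1)) * C (m - 1)
                    + 3 * B m * (f (-(m : ℤ) + 1) - f (-(m : ℤ) - 1)) / ΔL) /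
                  (4 + B m / B (m - 1))) :
    (∀ j : ℕ, 1 ≤ j → uSeq (j : ℤ) + uSeq ((j : ℤ) - 1) * a ≠ 0) ∧
    (4 + a ≠ 0) ∧
    (∀ j : ℕ, 2 ≤ j → A (j - 1) ≠ 0 ∧ 4 + A j / A (j - 1) ≠ 0) ∧
    (4 + B 1 ≠ 0) ∧
    (∀ m : ℕ, 2 ≤ m → B (m - 1) ≠ 0 ∧ 4 + B m / B (m - 1) ≠ 0) ∧
    (∀ m : ℕ, 1 ≤ m →
      C m = 3 * (-1 : ℝ) ^ n * (a / ΔR) * uSeq (m : ℤ) * uSeq 1 /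
              (uSeq (m : ℤ) * uSeq (n : ℤ) + uSeq (m : ℤ) * uSeq ((n : ℤ) - 1) * a
                + uSeq (n : ℤ) * uSeq ((m : ℤ) - 1) * b) * f (n : ℤ)
          + (∑ k ∈ Finset.Icc (1 : ℤ) ((n : ℤ) - 1),
              3 * (-1 : ℝ) ^ k * (a / ΔR) * uSeq (m : ℤ) *
                (uSeq ((n : ℤ) - k + 1) - uSeq ((n : ℤ) - k - 1)) /
                (uSeq (m : ℤ) * uSeq (n : ℤ) + uSeq (m : ℤ) * uSeq ((n : ℤ) - 1) * a
                  + uSeq (n : ℤ) * uSeq ((m : ℤ) - 1) * b) * f k)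
          + 3 * ((a / ΔR) * uSeq (m : ℤ) * (uSeq (n : ℤ) - uSeq ((n : ℤ) - 1))
                  - (b / ΔL) * uSeq (n : ℤ) * (uSeq (m : ℤ) - uSeq ((m : ℤ) - 1))) /
              (uSeq (m : ℤ) * uSeq (n : ℤ) + uSeq (m : ℤ) * uSeq ((n : ℤ) - 1) * a
                + uSeq (n : ℤ) * uSeq ((m : ℤ) - 1) * b) * f 0
          + (∑ k ∈ Finset.Icc (-(m : ℤ) + 1) (-1 : ℤ),
              3 * (-1 : ℝ) ^ (k + 1) * (b / ΔL) * uSeq (n : ℤ) *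
                (uSeq ((m : ℤ) + k + 1) - uSeq ((m : ℤ) + k - 1)) /
                (uSeq (m : ℤ) * uSeq (n : ℤ) + uSeq (m : ℤ) * uSeq ((n : ℤ) - 1) * a
                  + uSeq (n : ℤ) * uSeq ((m : ℤ) - 1) * b) * f k)
          + 3 * (-1 : ℝ) ^ (m + 1) * (b / ΔL) * uSeq (n : ℤ) * uSeq 1 /
              (uSeq (m : ℤ) * uSeq (n : ℤ) + uSeq (m : ℤ) * uSeq ((n : ℤ) - 1) * a
                + uSeq (n : ℤ) * uSeq ((m : ℤ) - 1) * b) * f (-(m : ℤ))) := by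
  obtain ⟨ha0, hb0, hab⟩ := interface_coeffs_neg_and_sum hL hR ha hb
  have hEpos : ∀ i, 0 < uSeqComb 1 a (i + 1) := uSeqComb_pos one_pos (by linarith)
  have hDpos := uSeqComb_uSeqComb_pos ha0 hb0 hab hn
  have hD0 : uSeqComb (uSeqComb 1 a n) (uSeq n * b) 0 = -(uSeq 1 * uSeq n * b) := by
    rw [uSeqComb_zero]; ring
  have hKA : uSeq 1 * a ≠ 0 := mul_ne_zero uSeq_one_pos.ne' ha0.ne
  have hKB : uSeq 1 * uSeq n * b ≠ 0 :=
    mul_ne_zero (mul_ne_zero uSeq_one_pos.ne' (uSeq_pos hn).ne') hb0.ne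
  have hA' i : A (i + 1) = (-1) ^ i * (uSeq 1 * a) / uSeqComb 1 a (i + 1) := by
    rw [hA (i + 1) (by omega), Nat.add_sub_cancel, uSeqComb_one_left]; ring
  have hB' := eq_alternating_div_of_ratio_rec (fourRec_uSeqComb _ _) hD0 hDpos hKB
    (by rw [hB1, ← uSeqComb_one_left, uSeqComb_one]; field_simp [uSeq_one_pos.ne']) hB2 hBrec
  have hCf1' : Cf 1 = 3 * (a / ΔR) * (f 0 - f 1) + 3 * (b / ΔL) * (f (-1) - f 0) := by
    rw [hCf1, ha, hb]; field_simp; ring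
  have hCfn := forwardCoeff_eq_div ha0.ne hEpos hA' hCf1' hCf2 hCfrec hn
  refine ⟨fun j hj ↦ ?_, (by linarith : (0 : ℝ) < 4 + a).ne',
    fun j hj ↦ ratio_ne_zero_of_alternating (fourRec_uSeqComb 1 a) hEpos hKA hA' hj,
    four_add_ne_zero_of_alternating (fourRec_uSeqComb _ _) hD0 hDpos hB',
    fun m hm ↦ ratio_ne_zero_of_alternating (fourRec_uSeqComb _ _) hDpos hKB hB' hm,
    fun m hm ↦ ?_⟩
  · obtain ⟨i, rfl⟩ := Nat.exists_eq_add_of_le' hj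
    exact uSeqComb_one_left a (i + 1) ▸ (hEpos i).ne'
  · rw [backwardCoeff_eq_div hb0.ne hn hDpos hB' hCfn hCm1 hCm2 hCmrec hm,
      uSeqComb_uSeqComb_one_left]
    exact twoSidedNumerator_div_eq a b ΔL ΔR _ f n m
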